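/- Comparison principle for the discrete backward time-fractional Hamilton–Jacobi–Bellman scheme: Let g be a numerical Hamiltonian continuous in q and satisfying (G1) (nonincreasing in q₁ and q₃, nondecreasing in q₂ and q₄), and let F⁰,…,F^{N−1} be grid functions. If (Uⁿ)_{n=0}^N and (Vⁿ)_{n=0}^N are families of grid functions with Uᴺ_{i,j} ≤ Vᴺ_{i,j} for all (i,j), and for all n = 0,…,N−1 and all (i,j) one has D̄^α_{Δt}Uⁿ_{i,j} − (Δ_hUⁿ)_{i,j} + g(x_{i,j},[D_hUⁿ]_{i,j}) ≤ Fⁿ_{i,j} and D̄^α_{Δt}Vⁿ_{i,j} − (Δ_hVⁿ)_{i,j} + g(x_{i,j},[D_hVⁿ]_{i,j}) ≥ Fⁿ_{i,j}, then Uⁿ_{i,j} ≤ Vⁿ_{i,j} for all n = 0,…,N and all (i,j). -/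

import Mathlib

open Real Finset

noncomputable section

/-- forward L1 coefficients `c_k^n` -/
def cF (α : ℝ) (n k : ℕ) : ℝ :=
  if k = 0 then (n : ℝ) ^ (1 - α) - ((n : ℝ) - 1) ^ (1 - α)
  else 2 * ((n : ℝ) - k) ^ (1 - α) - ((n : ℝ) + 1 - k) ^ (1 - α) - ((n : ℝ) - 1 - k) ^ (1 - α)

/-- backward L1 coefficients `c̄_n^k` (with horizon `N`) -/
def cB (α : ℝ) (N n k : ℕ) : ℝ :=
  if k = N then ((N : ℝ) - n) ^ (1 - α) - ((N : ℝ) - 1 - n) ^ (1 - α)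
  else 2 * ((k : ℝ) - n) ^ (1 - α) - ((k : ℝ) + 1 - n) ^ (1 - α) - ((k : ℝ) - 1 - n) ^ (1 - α)

/-- `ρ_α = Γ(2-α) Δt^α` -/
def rhoA (α Δt : ℝ) : ℝ := Real.Gamma (2 - α) * Δt ^ α

/-- discrete forward Caputo derivative (L1 scheme) -/
def DF (α Δt : ℝ) (w : ℕ → ℝ) (n : ℕ) : ℝ :=
  (rhoA α Δt)⁻¹ * (w n - ∑ k ∈ Finset.range n, cF α n k * w k)

/-- discrete backward Caputo derivative (L1 scheme) -/
def DB (α Δt : ℝ) (N : ℕ) (w : ℕ → ℝ) (n : ℕ) : ℝ :=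
  (rhoA α Δt)⁻¹ * (w n - ∑ k ∈ Finset.Icc (n + 1) N, cB α N n k * w k)

/-- grid functions on the uniform periodic grid of the 2-torus -/
abbrev GridFun (Nh : ℕ) := ZMod Nh → ZMod Nh → ℝ

/-- mesh step `h = 1/N_h` -/
def hstep (Nh : ℕ) : ℝ := (Nh : ℝ)⁻¹

/-- grid point `x_{i,j} = (i h, j h)` -/
def gridPt (Nh : ℕ) (i j : ZMod Nh) : ℝ × ℝ :=
  ((i.val : ℝ) * hstep Nh, (j.val : ℝ) * hstep Nh)

/-- forward difference in the first variable -/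
def D1p (Nh : ℕ) (U : GridFun Nh) (i j : ZMod Nh) : ℝ := (U (i + 1) j - U i j) / hstep Nh

/-- forward difference in the second variable -/
def D2p (Nh : ℕ) (U : GridFun Nh) (i j : ZMod Nh) : ℝ := (U i (j + 1) - U i j) / hstep Nh

/-- the discrete gradient `[D_h U]_{i,j} ∈ ℝ⁴` -/
def Dh (Nh : ℕ) (U : GridFun Nh) (i j : ZMod Nh) : Fin 4 → ℝ :=
  ![D1p Nh U i j, D1p Nh U (i - 1) j, D2p Nh U i j, D2p Nh U i (j - 1)]

/-- five point discrete Laplacian -/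
def lapl (Nh : ℕ) (U : GridFun Nh) (i j : ZMod Nh) : ℝ :=
  -(4 * U i j - U (i + 1) j - U (i - 1) j - U i (j + 1) - U i (j - 1)) / (hstep Nh) ^ 2

/-- the scalar product `(U,V)₂ = h² Σ_{i,j} U_{i,j} V_{i,j}` -/
def inner2 (Nh : ℕ) [NeZero Nh] (U V : GridFun Nh) : ℝ :=
  (hstep Nh) ^ 2 * ∑ i : ZMod Nh, ∑ j : ZMod Nh, U i j * V i j

/-- the set `𝒦_h` of discrete probability measures -/
def Kh (Nh : ℕ) [NeZero Nh] : Set (GridFun Nh) :=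
  {M | (∀ i j, 0 ≤ M i j) ∧ inner2 Nh M (fun _ _ => 1) = 1}

/-- partial derivative `∂_{q_k} g(q)` -/
def gq (g : (Fin 4 → ℝ) → ℝ) (q : Fin 4 → ℝ) (k : Fin 4) : ℝ :=
  fderiv ℝ g q (Pi.single k 1)

/-- (G1): `g` nonincreasing in `q₁, q₃` and nondecreasing in `q₂, q₄` -/
def G1 (g : (Fin 4 → ℝ) → ℝ) : Prop :=
  (∀ q : Fin 4 → ℝ, Antitone fun s => g (Function.update q 0 s)) ∧
  (∀ q : Fin 4 → ℝ, Monotone fun s => g (Function.update q 1 s)) ∧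
  (∀ q : Fin 4 → ℝ, Antitone fun s => g (Function.update q 2 s)) ∧
  (∀ q : Fin 4 → ℝ, Monotone fun s => g (Function.update q 3 s))

/-- the discrete transport operator `𝓑_{i,j}(U,M)` -/
def Bop (Nh : ℕ) (g : ZMod Nh → ZMod Nh → (Fin 4 → ℝ) → ℝ) (U M : GridFun Nh)
    (i j : ZMod Nh) : ℝ :=
  (hstep Nh)⁻¹ *
    (M i j * gq (g i j) (Dh Nh U i j) 0 - M (i - 1) j * gq (g (i - 1) j) (Dh Nh U (i - 1) j) 0
     + M (i + 1) j * gq (g (i + 1) j) (Dh Nh U (i + 1) j) 1 - M i j * gq (g i j) (Dh Nh U i j) 1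
     + M i j * gq (g i j) (Dh Nh U i j) 2 - M i (j - 1) * gq (g i (j - 1)) (Dh Nh U i (j - 1)) 2
     + M i (j + 1) * gq (g i (j + 1)) (Dh Nh U i (j + 1)) 3 - M i j * gq (g i j) (Dh Nh U i j) 3)

/-! The discrete backward Caputo derivative has a nonnegative ρ_α⁻¹ in front of `wⁿ` and nonpositive
weights `-c̄_n^k` (by concavity of `t ↦ t^{1-α}`) in front of the later values, so it obeys a
maximum principle in time; the five-point Laplacian and, by (G1), the upwind Hamiltonian obey one in
space. At a maximum point of `Uⁿ - Vⁿ`, assuming `U^k ≤ V^k` for all later times `k`, subtracting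
the two scheme inequalities therefore forces `Uⁿ - Vⁿ ≤ 0`; downward induction on `n` concludes. -/

lemma add_one_rpow_add_sub_one_rpow_le {p : ℝ} (hp₀ : 0 ≤ p) (hp₁ : p ≤ 1) {x : ℝ} (hx : 1 ≤ x) :
    (x + 1) ^ p + (x - 1) ^ p ≤ 2 * x ^ p := by
  have h := (Real.concaveOn_rpow hp₀ hp₁).2 (Set.mem_Ici.2 (by linarith : (0 : ℝ) ≤ x - 1))
    (Set.mem_Ici.2 (by linarith : (0 : ℝ) ≤ x + 1)) (by norm_num : (0 : ℝ) ≤ 1 / 2)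
    (by norm_num : (0 : ℝ) ≤ 1 / 2) (by norm_num)
  have hmid : (1 / 2 : ℝ) • (x - 1) + (1 / 2 : ℝ) • (x + 1) = x := by
    simp only [smul_eq_mul]; ring
  rw [hmid, smul_eq_mul, smul_eq_mul] at h
  linarith

lemma cB_nonneg {α : ℝ} (hα₀ : 0 ≤ α) (hα₁ : α ≤ 1) {N n k : ℕ} (hnk : n < k) :
    0 ≤ cB α N n k := by
  have hk : (1 : ℝ) ≤ k - n := by
    have : (n : ℝ) + 1 ≤ k := by exact_mod_cast hnk
    linarith
  unfold cB
  split_ifs with hkN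
  · subst hkN
    have := Real.rpow_le_rpow (by linarith : (0 : ℝ) ≤ k - 1 - n)
      (by linarith : (k : ℝ) - 1 - n ≤ k - n) (by linarith : 0 ≤ 1 - α)
    linarith
  · have := add_one_rpow_add_sub_one_rpow_le (by linarith : 0 ≤ 1 - α) (by linarith) hk
    rw [show (k : ℝ) + 1 - n = k - n + 1 by ring, show (k : ℝ) - 1 - n = k - n - 1 by ring]
    linarith

lemma rhoA_pos {α Δt : ℝ} (hα : α < 2) (hΔt : 0 < Δt) : 0 < rhoA α Δt :=
  mul_pos (Real.Gamma_pos_of_pos (by linarith)) (Real.rpow_pos_of_pos hΔt α)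

lemma DB_sub (α Δt : ℝ) (N : ℕ) (w v : ℕ → ℝ) (n : ℕ) :
    DB α Δt N w n - DB α Δt N v n = DB α Δt N (fun m => w m - v m) n := by
  simp only [DB, mul_sub, Finset.sum_sub_distrib]
  ring

lemma nonpos_of_DB_nonpos {α Δt : ℝ} (hα : α ∈ Set.Icc (0 : ℝ) 1) (hΔt : 0 < Δt) {N n : ℕ}
    {w : ℕ → ℝ} (hlater : ∀ k, n < k → k ≤ N → w k ≤ 0) (hDB : DB α Δt N w n ≤ 0) :
    w n ≤ 0 := by
  have hsum : ∑ k ∈ Icc (n + 1) N, cB α N n k * w k ≤ 0 :=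
    sum_nonpos fun k hk => by
      obtain ⟨hk₁, hk₂⟩ := mem_Icc.1 hk
      exact mul_nonpos_of_nonneg_of_nonpos (cB_nonneg hα.1 hα.2 hk₁) (hlater k hk₁ hk₂)
  have hρ : 0 < (rhoA α Δt)⁻¹ := inv_pos.2 (rhoA_pos (by linarith [hα.2]) hΔt)
  have := nonpos_of_mul_nonpos_right hDB hρ
  linarith

lemma G1.apply_le_apply {g : (Fin 4 → ℝ) → ℝ} (hg : G1 g) {a b : Fin 4 → ℝ}
    (h₀ : a 0 ≤ b 0) (h₁ : b 1 ≤ a 1) (h₂ : a 2 ≤ b 2) (h₃ : b 3 ≤ a 3) : g b ≤ g a := by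
  obtain ⟨H₀, H₁, H₂, H₃⟩ := hg
  set c₃ := Function.update b 3 (a 3)
  set c₂ := Function.update c₃ 2 (a 2)
  set c₁ := Function.update c₂ 1 (a 1)
  have hc₀ : Function.update c₁ 0 (a 0) = a := by
    funext k; fin_cases k <;> simp [c₁, c₂, c₃]
  calc g b ≤ g c₃ := by simpa only [Function.update_eq_self] using H₃ b h₃
    _ ≤ g c₂ := by
      simpa only [Function.update_eq_self] using H₂ c₃ (show a 2 ≤ c₃ 2 by simpa [c₃] using h₂)
    _ ≤ g c₁ := by
      simpa only [Function.update_eq_self] using H₁ c₂ (show c₂ 1 ≤ a 1 by simpa [c₂, c₃] using h₁)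
    _ ≤ g a := by
      simpa only [Function.update_eq_self, hc₀] using
        H₀ c₁ (show a 0 ≤ c₁ 0 by simpa [c₁, c₂, c₃] using h₀)

lemma hstep_nonneg (Nh : ℕ) : 0 ≤ hstep Nh := inv_nonneg.2 (Nat.cast_nonneg Nh)

section MaxPoint

variable {Nh : ℕ} {U V : GridFun Nh} {i₀ j₀ : ZMod Nh}

lemma lapl_le_of_isMax (hmax : ∀ i j, U i j - V i j ≤ U i₀ j₀ - V i₀ j₀) :
    lapl Nh U i₀ j₀ ≤ lapl Nh V i₀ j₀ := by
  have := hmax (i₀ + 1) j₀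
  have := hmax (i₀ - 1) j₀
  have := hmax i₀ (j₀ + 1)
  have := hmax i₀ (j₀ - 1)
  rw [← sub_nonpos, lapl, lapl, div_sub_div_same]
  exact div_nonpos_of_nonpos_of_nonneg (by linarith) (sq_nonneg _)

lemma G1.apply_Dh_le_of_isMax {g : (Fin 4 → ℝ) → ℝ} (hg : G1 g)
    (hmax : ∀ i j, U i j - V i j ≤ U i₀ j₀ - V i₀ j₀) :
    g (Dh Nh V i₀ j₀) ≤ g (Dh Nh U i₀ j₀) := by
  have := hmax (i₀ + 1) j₀
  have := hmax (i₀ - 1) j₀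
  have := hmax i₀ (j₀ + 1)
  have := hmax i₀ (j₀ - 1)
  refine hg.apply_le_apply ?_ ?_ ?_ ?_ <;>
    simp only [Dh, D1p, D2p, sub_add_cancel, Matrix.cons_val] <;>
    exact div_le_div_of_nonneg_right (by linarith) (hstep_nonneg Nh)

end MaxPoint

lemma scheme_comparison_step {α Δt : ℝ} (hα : α ∈ Set.Icc (0 : ℝ) 1) (hΔt : 0 < Δt)
    {N Nh n : ℕ} [NeZero Nh] {g : ZMod Nh → ZMod Nh → (Fin 4 → ℝ) → ℝ} (hg1 : ∀ i j, G1 (g i j))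
    {F : GridFun Nh} {U V : ℕ → GridFun Nh}
    (hlater : ∀ k, n < k → k ≤ N → ∀ i j, U k i j ≤ V k i j)
    (hsub : ∀ i j,
      DB α Δt N (fun m => U m i j) n - lapl Nh (U n) i j + g i j (Dh Nh (U n) i j) ≤ F i j)
    (hsup : ∀ i j,
      F i j ≤ DB α Δt N (fun m => V m i j) n - lapl Nh (V n) i j + g i j (Dh Nh (V n) i j)) :
    ∀ i j, U n i j ≤ V n i j := by
  obtain ⟨⟨i₀, j₀⟩, hmax⟩ :=
    Finite.exists_max fun p : ZMod Nh × ZMod Nh => U n p.1 p.2 - V n p.1 p.2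
  have hmax' : ∀ i j, U n i j - V n i j ≤ U n i₀ j₀ - V n i₀ j₀ := fun i j => hmax (i, j)
  have hDB : DB α Δt N (fun m => U m i₀ j₀ - V m i₀ j₀) n ≤ 0 := by
    have := lapl_le_of_isMax hmax'
    have := (hg1 i₀ j₀).apply_Dh_le_of_isMax hmax'
    have := hsub i₀ j₀
    have := hsup i₀ j₀
    rw [← DB_sub]
    linarith
  have hmax_nonpos := nonpos_of_DB_nonpos hα hΔt
    (fun k hk hkN => sub_nonpos.2 (hlater k hk hkN i₀ j₀)) hDB
  intro i j
  linarith [hmax' i j]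

theorem HJB_comparison_principle_general (α Δt : ℝ) (hα : α ∈ Set.Ioo (0 : ℝ) 1)
    (hΔt : 0 < Δt) (N Nh : ℕ) [NeZero Nh]
    (g : ZMod Nh → ZMod Nh → (Fin 4 → ℝ) → ℝ)
    (hg1 : ∀ i j, G1 (g i j))
    (F : ℕ → GridFun Nh) (U V : ℕ → GridFun Nh)
    (hterm : ∀ i j, U N i j ≤ V N i j)
    (hsub : ∀ n < N, ∀ i j,
      DB α Δt N (fun m => U m i j) n - lapl Nh (U n) i j
        + g i j (Dh Nh (U n) i j) ≤ F n i j)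
    (hsup : ∀ n < N, ∀ i j,
      F n i j ≤ DB α Δt N (fun m => V m i j) n - lapl Nh (V n) i j
        + g i j (Dh Nh (V n) i j)) :
    ∀ n ≤ N, ∀ i j, U n i j ≤ V n i j := by
  intro n
  induction n using Nat.strong_decreasing_induction with
  | base => exact ⟨N, fun m hm hmN => absurd hmN (not_le.2 hm)⟩
  | step n ih =>
    intro hn
    rcases hn.eq_or_lt with rfl | hn
    · exact hterm
    · exact scheme_comparison_step (Set.Ioo_subset_Icc_self hα) hΔt hg1
        (fun k hk hkN => ih k hk hkN) (hsub n hn) (hsup n hn)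

/-- Comparison principle for the discrete backward time-fractional HJB scheme. -/
theorem HJB_comparison_principle (α Δt : ℝ) (hα : α ∈ Set.Ioo (0 : ℝ) 1)
    (hΔt : 0 < Δt) (N Nh : ℕ) [NeZero Nh]
    (g : ZMod Nh → ZMod Nh → (Fin 4 → ℝ) → ℝ)
    (hgc : ∀ i j, Continuous (g i j)) (hg1 : ∀ i j, G1 (g i j))
    (F : ℕ → GridFun Nh) (U V : ℕ → GridFun Nh)
    (hterm : ∀ i j, U N i j ≤ V N i j)
    (hsub : ∀ n < N, ∀ i j,
      DB α Δt N (fun m => U m i j) n - lapl Nh (U n) i j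
        + g i j (Dh Nh (U n) i j) ≤ F n i j)
    (hsup : ∀ n < N, ∀ i j,
      F n i j ≤ DB α Δt N (fun m => V m i j) n - lapl Nh (V n) i j
        + g i j (Dh Nh (V n) i j)) :
    ∀ n ≤ N, ∀ i j, U n i j ≤ V n i j :=
  HJB_comparison_principle_general α Δt hα hΔt N Nh g hg1 F U V hterm hsub hsup
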